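/- arXiv:2010.00135 — 2 statements merged into one kernel-verified Lean document; each statement's English description precedes it below -/
import Mathlib

section
/- (Prékopa–Leindler inequality for k functions) Let f_1, …, f_k and h be nonnegative integrable real functions on ℝ^n and let λ_1, …, λ_k ≥ 0 with ∑_{i=1}^k λ_i = 1 be such that h(∑_{i=1}^k λ_i x_i) ≥ ∏_{i=1}^k f_i(x_i)^{λ_i} for all x_1, …, x_k ∈ ℝ^n. Then ∏_{i=1}^k (∫_{ℝ^n} f_i dx)^{λ_i} ≤ ∫_{ℝ^n} h dx. -/
/-!
On the line, Brunn–Minkowski `|A₁ + ⋯ + A_k| ≥ |A₁| + ⋯ + |A_k|` for nonempty measurable sets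
reduces to two compact sets `K, L`: the translates `inf L + K` and `sup K + L` lie in `K + L` and
meet in one point. If each `f_i` has supremum `1`, its superlevel sets at levels `t < 1` are
nonempty and `∑ λ_i • {f_i ≥ t} ⊆ {h ≥ t}`; integrating in `t` (layer cake) gives
`∑ λ_i ∫ f_i ≤ ∫ h`, and weighted AM–GM turns this into `∏ (∫ f_i)^λ_i ≤ ∫ h`. Scaling handles
bounded `f_i` and monotone convergence the rest. For measurable `ℝ≥0∞`-valued functions the
inequality tensorises: apply it on each fibre, then to the fibre integrals (Tonelli), which gives
`ℝⁿ`. Real-valued `f_i, h` are replaced by measurable minorants resp. a measurable majorant with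
the same integrals.
-/

open MeasureTheory Set
open scoped ENNReal Pointwise

namespace Real

theorem volume_add_volume_le_volume_add_of_isCompact {K L : Set ℝ} (hK : IsCompact K)
    (hL : IsCompact L) (hK₀ : K.Nonempty) (hL₀ : L.Nonempty) :
    volume K + volume L ≤ volume (K + L) := by
  set a := sSup K
  set b := sInf L
  have hcover : (b +ᵥ K) ∪ (a +ᵥ L) ⊆ K + L := by
    rintro _ (⟨k, hk, rfl⟩ | ⟨l, hl, rfl⟩)
    · simpa [add_comm] using add_mem_add hk (hL.sInf_mem hL₀)
    · exact add_mem_add (hK.sSup_mem hK₀) hl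
  have hmeet : (b +ᵥ K) ∩ (a +ᵥ L) ⊆ {a + b} := by
    rintro _ ⟨⟨k, hk, rfl⟩, ⟨l, hl, hkl⟩⟩
    have : k ≤ a := le_csSup hK.bddAbove hk
    have : b ≤ l := csInf_le hL.bddBelow hl
    simp only [vadd_eq_add, mem_singleton_iff] at hkl ⊢
    linarith
  calc volume K + volume L = volume (b +ᵥ K) + volume (a +ᵥ L) := by
        rw [measure_vadd, measure_vadd]
    _ = volume ((b +ᵥ K) ∪ (a +ᵥ L)) + volume ((b +ᵥ K) ∩ (a +ᵥ L)) :=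
        (measure_union_add_inter _ (hL.vadd a).measurableSet).symm
    _ ≤ volume (K + L) + volume ({a + b} : Set ℝ) := by gcongr
    _ = volume (K + L) := by rw [measure_singleton, add_zero]

/-- Unlike `volume`, this is superadditive under Minkowski sums of arbitrary nonempty sets, which
lets the `k`-set Brunn–Minkowski inequality go by induction although a finite sum of measurable
sets need not be measurable. -/
noncomputable def innerVolume (S : Set ℝ) : ℝ≥0∞ :=
  ⨆ (K : Set ℝ) (_ : K ⊆ S ∧ IsCompact K), volume K

theorem innerVolume_le_volume (S : Set ℝ) : innerVolume S ≤ volume S :=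
  iSup₂_le fun _ hK => measure_mono hK.1

theorem _root_.MeasurableSet.innerVolume_eq {A : Set ℝ} (hA : MeasurableSet A) :
    innerVolume A = volume A := by
  rw [hA.measure_eq_iSup_isCompact, innerVolume]
  simp only [iSup_and]

theorem innerVolume_add_innerVolume_le {S T : Set ℝ} (hS : S.Nonempty) (hT : T.Nonempty) :
    innerVolume S + innerVolume T ≤ innerVolume (S + T) := by
  obtain ⟨s, hs⟩ := hS
  obtain ⟨t, ht⟩ := hT
  refine ENNReal.biSup_add_biSup_le' ⟨∅, empty_subset _, isCompact_empty⟩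
    ⟨∅, empty_subset _, isCompact_empty⟩ fun K ⟨hKS, hK⟩ L ⟨hLT, hL⟩ => ?_
  calc volume K + volume L ≤ volume (insert s K) + volume (insert t L) := by
        gcongr <;> exact subset_insert _ _
    _ ≤ volume (insert s K + insert t L) :=
        volume_add_volume_le_volume_add_of_isCompact (hK.insert s) (hL.insert t)
          (insert_nonempty s K) (insert_nonempty t L)
    _ ≤ innerVolume (S + T) :=
        le_iSup₂_of_le (insert s K + insert t L)
          ⟨add_subset_add (insert_subset hs hKS) (insert_subset ht hLT),
            (hK.insert s).add (hL.insert t)⟩ le_rfl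

theorem sum_innerVolume_le_innerVolume_sum {ι : Type*} (s : Finset ι) {A : ι → Set ℝ}
    (hA : ∀ i ∈ s, (A i).Nonempty) :
    ∑ i ∈ s, innerVolume (A i) ≤ innerVolume (∑ i ∈ s, A i) := by
  classical
  induction s using Finset.cons_induction with
  | empty => exact zero_le
  | cons j s hj ih =>
    have hA' : ∀ i ∈ s, (A i).Nonempty := fun i hi => hA i (Finset.mem_cons_of_mem hi)
    choose x hx using hA'
    have hsum : (∑ i ∈ s, A i).Nonempty :=
      ⟨_, finsetSum_mem_finsetSum s A (fun i => if hi : i ∈ s then x i hi else 0)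
        fun i hi => by simpa [hi] using hx i hi⟩
    rw [Finset.sum_cons, Finset.sum_cons]
    calc innerVolume (A j) + ∑ i ∈ s, innerVolume (A i)
        ≤ innerVolume (A j) + innerVolume (∑ i ∈ s, A i) := by
          gcongr; exact ih fun i hi => hA i (Finset.mem_cons_of_mem hi)
      _ ≤ innerVolume (A j + ∑ i ∈ s, A i) :=
          innerVolume_add_innerVolume_le (hA j (Finset.mem_cons_self j s)) hsum

theorem sum_volume_le_volume_sum {ι : Type*} (s : Finset ι) {A : ι → Set ℝ}
    (hA : ∀ i ∈ s, MeasurableSet (A i)) (hA₀ : ∀ i ∈ s, (A i).Nonempty) :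
    ∑ i ∈ s, volume (A i) ≤ volume (∑ i ∈ s, A i) :=
  calc ∑ i ∈ s, volume (A i) = ∑ i ∈ s, innerVolume (A i) :=
        Finset.sum_congr rfl fun i hi => (hA i hi).innerVolume_eq.symm
    _ ≤ innerVolume (∑ i ∈ s, A i) := sum_innerVolume_le_innerVolume_sum s hA₀
    _ ≤ volume (∑ i ∈ s, A i) := innerVolume_le_volume _

end Real

theorem lintegral_eq_lintegral_meas_ofReal_le {α : Type*} [MeasurableSpace α] (μ : Measure α)
    [SFinite μ] {g : α → ℝ≥0∞} (hg : Measurable g) :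
    ∫⁻ x, g x ∂μ = ∫⁻ t in Ioi 0, μ {x | ENNReal.ofReal t ≤ g x} := by
  set E := {p : α × ℝ | ENNReal.ofReal p.2 ≤ g p.1}
  have hE : MeasurableSet E :=
    measurableSet_le measurable_snd.ennreal_ofReal (hg.comp measurable_fst)
  have hslice : ∀ a : ℝ≥0∞, volume.restrict (Ioi 0) {t : ℝ | ENNReal.ofReal t ≤ a} = a := by
    intro a
    rcases eq_or_ne a ⊤ with rfl | ha
    · simp
    · have : {t : ℝ | ENNReal.ofReal t ≤ a} = Iic a.toReal := by
        ext t; simp [ENNReal.ofReal_le_iff_le_toReal ha]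
      rw [this, Measure.restrict_apply measurableSet_Iic, Iic_inter_Ioi, Real.volume_Ioc,
        sub_zero, ENNReal.ofReal_toReal ha]
  calc ∫⁻ x, g x ∂μ = ∫⁻ x, volume.restrict (Ioi 0) (Prod.mk x ⁻¹' E) ∂μ :=
        lintegral_congr fun x => (hslice (g x)).symm
    _ = (μ.prod (volume.restrict (Ioi 0))) E := (Measure.prod_apply hE).symm
    _ = ∫⁻ t in Ioi 0, μ {x | ENNReal.ofReal t ≤ g x} := Measure.prod_apply_symm hE

theorem ENNReal.geom_mean_le_arith_mean_weighted {ι : Type*} (s : Finset ι) {w : ι → ℝ}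
    (hw : ∀ i ∈ s, 0 < w i) (hw' : ∑ i ∈ s, w i = 1) (z : ι → ℝ≥0∞) :
    ∏ i ∈ s, z i ^ w i ≤ ∑ i ∈ s, ENNReal.ofReal (w i) * z i := by
  by_cases htop : ∃ i ∈ s, z i = ⊤
  · obtain ⟨i, hi, hzi⟩ := htop
    refine le_top.trans_eq (ENNReal.sum_eq_top.2 ⟨i, hi, ?_⟩).symm
    rw [hzi, ENNReal.mul_top (by simpa using hw i hi)]
  push Not at htop
  have hw'' : ∑ i ∈ s, (w i).toNNReal = 1 := by
    rw [← Real.toNNReal_sum_of_nonneg fun i hi => (hw i hi).le, hw', Real.toNNReal_one]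
  calc ∏ i ∈ s, z i ^ w i
      = ((∏ i ∈ s, (z i).toNNReal ^ ((w i).toNNReal : ℝ) : NNReal) : ℝ≥0∞) := by
        rw [ENNReal.ofNNReal_finsetProd]
        refine Finset.prod_congr rfl fun i hi => ?_
        rw [ENNReal.coe_rpow_of_nonneg _ (NNReal.coe_nonneg _), ENNReal.coe_toNNReal (htop i hi),
          Real.coe_toNNReal _ (hw i hi).le]
    _ ≤ ((∑ i ∈ s, (w i).toNNReal * (z i).toNNReal : NNReal) : ℝ≥0∞) :=
        ENNReal.coe_le_coe.2 (NNReal.geom_mean_le_arith_mean_weighted s _ _ hw'')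
    _ = ∑ i ∈ s, ENNReal.ofReal (w i) * z i := by
        rw [ENNReal.ofNNReal_finsetSum]
        refine Finset.sum_congr rfl fun i hi => ?_
        rw [ENNReal.coe_mul, ENNReal.coe_toNNReal (htop i hi)]
        rfl

theorem ENNReal.prod_iSup_of_monotone {ι : Type*} (s : Finset ι) {f : ι → ℕ → ℝ≥0∞}
    (hf : ∀ i, Monotone (f i)) : ∏ i ∈ s, ⨆ n, f i n = ⨆ n, ∏ i ∈ s, f i n := by
  classical
  induction s using Finset.cons_induction with
  | empty => simp
  | cons j s hj ih =>
    simp only [Finset.prod_cons, ih, ENNReal.iSup_mul, ENNReal.mul_iSup]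
    refine le_antisymm (iSup₂_le fun m n => le_iSup_of_le (max m n) ?_)
      (iSup_le fun n => le_iSup₂_of_le n n le_rfl)
    gcongr
    · exact hf j (le_max_right m n)
    · exact hf _ (le_max_left m n)

theorem ENNReal.ofReal_prod_rpow {ι : Type*} (s : Finset ι) {a w : ι → ℝ} (ha : ∀ i ∈ s, 0 ≤ a i)
    (hw : ∀ i ∈ s, 0 ≤ w i) :
    ENNReal.ofReal (∏ i ∈ s, a i ^ w i) = ∏ i ∈ s, ENNReal.ofReal (a i) ^ w i := by
  rw [ENNReal.ofReal_prod_of_nonneg fun i hi => Real.rpow_nonneg (ha i hi) _]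
  exact Finset.prod_congr rfl fun i hi => (ENNReal.ofReal_rpow_of_nonneg (ha i hi) (hw i hi)).symm

theorem AEMeasurable.exists_measurable_ge_lintegral_eq {α : Type*} [MeasurableSpace α]
    {μ : Measure α} {f : α → ℝ≥0∞} (hf : AEMeasurable f μ) :
    ∃ g : α → ℝ≥0∞, Measurable g ∧ f ≤ g ∧ ∫⁻ a, g a ∂μ = ∫⁻ a, f a ∂μ := by
  classical
  set N := toMeasurable μ {x | f x ≠ hf.mk f x}
  have hfN : ∀ x ∉ N, f x = hf.mk f x := fun x hx => by
    by_contra hne; exact hx (subset_toMeasurable _ _ hne)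
  have hN : ∀ᵐ x ∂μ, x ∉ N := by
    rw [← measure_eq_zero_iff_ae_notMem, measure_toMeasurable]; exact ae_iff.1 hf.ae_eq_mk
  refine ⟨N.piecewise ⊤ (hf.mk f),
    Measurable.piecewise (measurableSet_toMeasurable _ _) measurable_const hf.measurable_mk,
    fun x => ?_, lintegral_congr_ae (hN.mono fun x hx => ?_)⟩
  · by_cases hx : x ∈ N
    · simp [hx]
    · simp [hx, hfN x hx]
  · simp [hx, hfN x hx]

/-- Measurability of `h` is required so that the property passes to product measures. -/
def SatisfiesPrekopaLeindler {E ι : Type*} [MeasurableSpace E] [AddCommMonoid E] [Module ℝ E]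
    [Fintype ι] (μ : Measure E) (lam : ι → ℝ) : Prop :=
  ∀ (f : ι → E → ℝ≥0∞) (h : E → ℝ≥0∞), (∀ i, Measurable (f i)) → Measurable h →
    (∀ x : ι → E, ∏ i, f i (x i) ^ lam i ≤ h (∑ i, lam i • x i)) →
    ∏ i, (∫⁻ x, f i x ∂μ) ^ lam i ≤ ∫⁻ x, h x ∂μ

namespace SatisfiesPrekopaLeindler

variable {E F ι : Type*} [MeasurableSpace E] [AddCommMonoid E] [Module ℝ E]
  [MeasurableSpace F] [AddCommMonoid F] [Module ℝ F] [Fintype ι] {lam : ι → ℝ}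

theorem of_subtype_pos {μ : Measure E} (hlam : ∀ i, 0 ≤ lam i)
    (H : SatisfiesPrekopaLeindler μ fun i : {i // 0 < lam i} => lam i) :
    SatisfiesPrekopaLeindler μ lam := by
  classical
  intro f h hf hh hfh
  have hzero : ∀ i, ¬0 < lam i → lam i = 0 := fun i hi => le_antisymm (not_lt.1 hi) (hlam i)
  have hprod : ∀ a : ι → ℝ≥0∞, ∏ i, a i ^ lam i = ∏ i : {i // 0 < lam i}, a i ^ lam i := by
    intro a
    rw [← Fintype.prod_subtype_mul_prod_subtype (fun i => 0 < lam i),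
      Fintype.prod_eq_one (fun i : {i // ¬0 < lam i} => a i ^ lam i) fun i => by
        rw [hzero i i.2, ENNReal.rpow_zero], mul_one]
  have hsum : ∀ x : ι → E, ∑ i, lam i • x i = ∑ i : {i // 0 < lam i}, lam i • x i := by
    intro x
    rw [← Fintype.sum_subtype_add_sum_subtype (fun i => 0 < lam i),
      Fintype.sum_eq_zero (fun i : {i // ¬0 < lam i} => lam i • x i) fun i => by
        rw [hzero i i.2, zero_smul], add_zero]
  rw [hprod]
  refine H (fun i => f i) h (fun i => hf i) hh fun x => ?_
  set y : ι → E := fun i => if hi : 0 < lam i then x ⟨i, hi⟩ else 0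
  have hy : ∀ i : {i // 0 < lam i}, y i = x i := fun i => dif_pos i.2
  simpa only [hprod, hsum, hy] using hfh y

theorem dirac_zero : SatisfiesPrekopaLeindler (Measure.dirac (0 : E)) lam := by
  intro f h hf hh hfh
  simpa only [lintegral_dirac' _ (hf _), lintegral_dirac' _ hh, smul_zero,
    Finset.sum_const_zero] using hfh fun _ => 0

theorem prod {μ : Measure E} {ν : Measure F} [SFinite μ] [SFinite ν]
    (hμ : SatisfiesPrekopaLeindler μ lam) (hν : SatisfiesPrekopaLeindler ν lam) :
    SatisfiesPrekopaLeindler (μ.prod ν) lam := by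
  intro f h hf hh hfh
  have hfibre : ∀ y : ι → F, ∏ i, (∫⁻ x, f i (x, y i) ∂μ) ^ lam i
      ≤ ∫⁻ x, h (x, ∑ i, lam i • y i) ∂μ := by
    intro y
    refine hμ _ _ (fun i => (hf i).comp measurable_prodMk_right)
      (hh.comp measurable_prodMk_right) fun x => ?_
    simpa only [Prod.smul_mk, ← prod_mk_sum] using hfh fun i => (x i, y i)
  have := hν _ _ (fun i => (hf i).lintegral_prod_left') hh.lintegral_prod_left' hfibre
  simpa only [lintegral_prod_symm _ (hf _).aemeasurable, lintegral_prod_symm _ hh.aemeasurable]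
    using this

theorem of_measurePreserving {μ : Measure E} {ν : Measure F} (L : E →ₗ[ℝ] F)
    (hL : MeasurePreserving L μ ν) (hμ : SatisfiesPrekopaLeindler μ lam) :
    SatisfiesPrekopaLeindler ν lam := by
  intro f h hf hh hfh
  have := hμ (fun i => f i ∘ L) (h ∘ L) (fun i => (hf i).comp hL.measurable)
    (hh.comp hL.measurable) fun x => by
      simpa only [Function.comp_apply, map_sum, map_smul] using hfh (L ∘ x)
  simpa only [Function.comp_apply, hL.lintegral_comp (hf _), hL.lintegral_comp hh] using this


theorem prod_integral_rpow_le {μ : Measure E} (hμ : SatisfiesPrekopaLeindler μ lam)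
    (hlam : ∀ i, 0 ≤ lam i) {f : ι → E → ℝ} {h : E → ℝ} (hf_nonneg : ∀ i x, 0 ≤ f i x)
    (hf_int : ∀ i, Integrable (f i) μ) (hh_nonneg : ∀ x, 0 ≤ h x) (hh_int : Integrable h μ)
    (hfh : ∀ x : ι → E, ∏ i, f i (x i) ^ lam i ≤ h (∑ i, lam i • x i)) :
    ∏ i, (∫ x, f i x ∂μ) ^ lam i ≤ ∫ x, h x ∂μ := by
  choose F hF hF_le hF_int using fun i =>
    exists_measurable_le_lintegral_eq μ fun x => ENNReal.ofReal (f i x)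
  obtain ⟨H, hH, hH_ge, hH_int⟩ :=
    hh_int.aemeasurable.ennreal_ofReal.exists_measurable_ge_lintegral_eq
  have key := hμ F H hF hH fun x => calc
    ∏ i, F i (x i) ^ lam i ≤ ∏ i, ENNReal.ofReal (f i (x i)) ^ lam i := by
        gcongr with i
        exacts [hlam i, hF_le i _]
    _ = ENNReal.ofReal (∏ i, f i (x i) ^ lam i) :=
        (ENNReal.ofReal_prod_rpow _ (fun i _ => hf_nonneg i _) fun i _ => hlam i).symm
    _ ≤ ENNReal.ofReal (h (∑ i, lam i • x i)) := ENNReal.ofReal_le_ofReal (hfh x)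
    _ ≤ H (∑ i, lam i • x i) := hH_ge _
  rw [← ENNReal.ofReal_le_ofReal_iff (integral_nonneg hh_nonneg), ENNReal.ofReal_prod_rpow _
    (fun i _ => integral_nonneg (hf_nonneg i)) fun i _ => hlam i]
  simpa only [← hF_int, hH_int, ← ofReal_integral_eq_lintegral_ofReal (hf_int _)
    (ae_of_all _ (hf_nonneg _)), ← ofReal_integral_eq_lintegral_ofReal hh_int
    (ae_of_all _ hh_nonneg)] using key

end SatisfiesPrekopaLeindler

namespace Real

variable {ι : Type*} [Fintype ι] {lam : ι → ℝ}

theorem sum_mul_volume_le_volume_of_prod_rpow_le (hlam : ∀ i, 0 < lam i) (hsum : ∑ i, lam i = 1)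
    {g : ι → ℝ → ℝ≥0∞} {h : ℝ → ℝ≥0∞} (hg : ∀ i, Measurable (g i))
    (hgh : ∀ x : ι → ℝ, ∏ i, g i (x i) ^ lam i ≤ h (∑ i, lam i • x i))
    {t : ℝ} (ht : 0 < t) (hne : ∀ i, {x | ENNReal.ofReal t ≤ g i x}.Nonempty) :
    ∑ i, ENNReal.ofReal (lam i) * volume {x | ENNReal.ofReal t ≤ g i x}
      ≤ volume {y | ENNReal.ofReal t ≤ h y} := by
  set A : ι → Set ℝ := fun i => {x | ENNReal.ofReal t ≤ g i x}
  have hsub : ∑ i, lam i • A i ⊆ {y | ENNReal.ofReal t ≤ h y} := by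
    intro z hz
    obtain ⟨x, hx, rfl⟩ := (mem_fintype_sum _ z).1 hz
    choose y hy hxy using hx
    calc ENNReal.ofReal t = ∏ i, ENNReal.ofReal t ^ lam i := by
          rw [← ENNReal.ofReal_prod_rpow _ (fun _ _ => ht.le) (fun i _ => (hlam i).le),
            ← rpow_sum_of_pos ht, hsum, rpow_one]
      _ ≤ ∏ i, g i (y i) ^ lam i := by
          gcongr with i; exacts [(hlam i).le, hy i]
      _ ≤ h (∑ i, x i) := by simpa only [hxy] using hgh y
  calc ∑ i, ENNReal.ofReal (lam i) * volume (A i) = ∑ i, volume (lam i • A i) := by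
        simp only [Measure.addHaar_smul_of_nonneg volume (hlam _).le, Module.finrank_self, pow_one]
    _ ≤ volume (∑ i, lam i • A i) :=
        sum_volume_le_volume_sum _
          (fun i _ => (measurableSet_le measurable_const (hg i)).const_smul₀ _)
          (fun i _ => (hne i).smul_set)
    _ ≤ volume {y | ENNReal.ofReal t ≤ h y} := measure_mono hsub

theorem sum_mul_lintegral_le_lintegral_of_iSup_eq_one (hlam : ∀ i, 0 < lam i)
    (hsum : ∑ i, lam i = 1) {g : ι → ℝ → ℝ≥0∞} {h : ℝ → ℝ≥0∞} (hg : ∀ i, Measurable (g i))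
    (hg₁ : ∀ i, ⨆ x, g i x = 1) (hh : Measurable h)
    (hgh : ∀ x : ι → ℝ, ∏ i, g i (x i) ^ lam i ≤ h (∑ i, lam i • x i)) :
    ∑ i, ENNReal.ofReal (lam i) * ∫⁻ x, g i x ≤ ∫⁻ x, h x := by
  have hlevel : ∀ᵐ t ∂volume.restrict (Ioi (0 : ℝ)),
      ∑ i, ENNReal.ofReal (lam i) * volume {x | ENNReal.ofReal t ≤ g i x}
        ≤ volume {y | ENNReal.ofReal t ≤ h y} := by
    -- at the level `t = 1` a superlevel set of some `g i` may be empty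
    filter_upwards [ae_restrict_mem measurableSet_Ioi, Measure.ae_ne _ 1] with t ht₀ ht₁
    rcases ht₁.lt_or_gt with ht₁ | ht₁
    · refine sum_mul_volume_le_volume_of_prod_rpow_le hlam hsum hg hgh ht₀ fun i => ?_
      have : ENNReal.ofReal t < ⨆ x, g i x := by rwa [hg₁, ENNReal.ofReal_lt_one]
      obtain ⟨x, hx⟩ := lt_iSup_iff.1 this
      exact ⟨x, hx.le⟩
    · refine le_of_eq_of_le (Finset.sum_eq_zero fun i _ => ?_) zero_le
      suffices {x | ENNReal.ofReal t ≤ g i x} = ∅ by rw [this, measure_empty, mul_zero]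
      refine eq_empty_of_forall_notMem fun x hx => ?_
      have := (hg₁ i).symm ▸ le_iSup (g i) x
      exact (ENNReal.one_lt_ofReal.2 ht₁).not_ge (hx.trans this)
  have hmeas : ∀ i, Measurable fun t : ℝ => volume {x | ENNReal.ofReal t ≤ g i x} := fun i =>
    Antitone.measurable fun s t hst => measure_mono fun x hx =>
      (ENNReal.ofReal_le_ofReal hst).trans hx
  calc ∑ i, ENNReal.ofReal (lam i) * ∫⁻ x, g i x
      = ∫⁻ t in Ioi 0, ∑ i, ENNReal.ofReal (lam i) * volume {x | ENNReal.ofReal t ≤ g i x} := by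
        rw [lintegral_finsetSum _ fun i _ => (hmeas i).const_mul _]
        refine Finset.sum_congr rfl fun i _ => ?_
        rw [lintegral_const_mul _ (hmeas i), lintegral_eq_lintegral_meas_ofReal_le _ (hg i)]
    _ ≤ ∫⁻ t in Ioi 0, volume {y | ENNReal.ofReal t ≤ h y} := lintegral_mono_ae hlevel
    _ = ∫⁻ y, h y := (lintegral_eq_lintegral_meas_ofReal_le _ hh).symm

theorem prod_lintegral_rpow_le_of_iSup_ne_top (hlam : ∀ i, 0 < lam i) (hsum : ∑ i, lam i = 1)
    {f : ι → ℝ → ℝ≥0∞} {h : ℝ → ℝ≥0∞} (hf : ∀ i, Measurable (f i))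
    (hf₀ : ∀ i, ⨆ x, f i x ≠ 0) (hf_top : ∀ i, ⨆ x, f i x ≠ ⊤) (hh : Measurable h)
    (hfh : ∀ x : ι → ℝ, ∏ i, f i (x i) ^ lam i ≤ h (∑ i, lam i • x i)) :
    ∏ i, (∫⁻ x, f i x) ^ lam i ≤ ∫⁻ x, h x := by
  set M : ι → ℝ≥0∞ := fun i => ⨆ x, f i x
  set C := ∏ i, M i ^ lam i
  have hC₀ : C ≠ 0 := Finset.prod_ne_zero_iff.2 fun i _ =>
    (ENNReal.rpow_pos (pos_iff_ne_zero.2 (hf₀ i)) (hf_top i)).ne'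
  have hC : C ≠ ⊤ := ENNReal.prod_ne_top fun i _ =>
    ENNReal.rpow_ne_top_of_nonneg (hlam i).le (hf_top i)
  have hnormal : ∑ i, ENNReal.ofReal (lam i) * ∫⁻ x, f i x / M i ≤ ∫⁻ y, h y / C := by
    refine sum_mul_lintegral_le_lintegral_of_iSup_eq_one hlam hsum
      (fun i => (hf i).div_const _) (fun i => ?_) (hh.div_const _) fun x => ?_
    · rw [← ENNReal.iSup_div, ENNReal.div_self (hf₀ i) (hf_top i)]
    · simp only [ENNReal.div_rpow_of_nonneg _ _ (hlam _).le]
      rw [ENNReal.prod_div_distrib_of_ne_top fun i _ =>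
        ENNReal.rpow_ne_top_of_nonneg (hlam i).le (hf_top i)]
      gcongr
      exact hfh x
  have hdiv : ∀ {F : ℝ → ℝ≥0∞} (a : ℝ≥0∞), Measurable F → ∫⁻ x, F x / a = (∫⁻ x, F x) / a :=
    fun a hF => lintegral_mul_const _ hF
  calc ∏ i, (∫⁻ x, f i x) ^ lam i = ∏ i, (M i * ∫⁻ x, f i x / M i) ^ lam i := by
        refine Finset.prod_congr rfl fun i _ => ?_
        rw [hdiv _ (hf i), ENNReal.mul_div_cancel (hf₀ i) (hf_top i)]
    _ = C * ∏ i, (∫⁻ x, f i x / M i) ^ lam i := by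
        rw [← Finset.prod_mul_distrib]
        exact Finset.prod_congr rfl fun i _ => ENNReal.mul_rpow_of_nonneg _ _ (hlam i).le
    _ ≤ C * ∑ i, ENNReal.ofReal (lam i) * ∫⁻ x, f i x / M i := by
        gcongr
        exact ENNReal.geom_mean_le_arith_mean_weighted _ (fun i _ => hlam i) hsum _
    _ ≤ C * ∫⁻ y, h y / C := by gcongr
    _ = ∫⁻ y, h y := by rw [hdiv _ hh, ENNReal.mul_div_cancel hC₀ hC]

theorem satisfiesPrekopaLeindler_of_pos (hlam : ∀ i, 0 < lam i) (hsum : ∑ i, lam i = 1) :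
    SatisfiesPrekopaLeindler (volume : Measure ℝ) lam := by
  intro f h hf hh hfh
  by_cases hzero : ∃ i, ⨆ x, f i x = 0
  · obtain ⟨i, hi⟩ := hzero
    have : ∫⁻ x, f i x = 0 := by simp [ENNReal.iSup_eq_zero.1 hi]
    rw [Finset.prod_eq_zero (Finset.mem_univ i) (by rw [this, ENNReal.zero_rpow_of_pos (hlam i)])]
    exact zero_le
  push Not at hzero
  set F : ℕ → ι → ℝ → ℝ≥0∞ := fun n i x => min (f i x) (n + 1)
  have hF_mono : ∀ i, Monotone fun n => F n i := fun i m n hmn x =>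
    min_le_min_left _ (by gcongr)
  have hF_sup : ∀ i, ⨆ n, ∫⁻ x, F n i x = ∫⁻ x, f i x := by
    intro i
    rw [← lintegral_iSup (fun n => (hf i).min measurable_const) (hF_mono i)]
    congr with x
    rw [← inf_iSup_eq, ← ENNReal.iSup_add, ENNReal.iSup_natCast, top_add, inf_top_eq]
  have hF : ∀ n, ∏ i, (∫⁻ x, F n i x) ^ lam i ≤ ∫⁻ x, h x := by
    intro n
    have hF_sup' : ∀ i, ⨆ x, F n i x = min (⨆ x, f i x) (n + 1) := fun i => by
      rw [iSup_inf_eq]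
    refine prod_lintegral_rpow_le_of_iSup_ne_top hlam hsum (fun i => (hf i).min measurable_const)
      (fun i => ?_) (fun i => ?_) hh fun x => le_trans ?_ (hfh x)
    · simp [hF_sup', hzero i]
    · simp [hF_sup']
    · gcongr with i
      exacts [(hlam i).le, min_le_left _ _]
  calc ∏ i, (∫⁻ x, f i x) ^ lam i = ∏ i, ⨆ n, (∫⁻ x, F n i x) ^ lam i := by
        refine Finset.prod_congr rfl fun i _ => ?_
        rw [← hF_sup i]
        exact (ENNReal.orderIsoRpow (lam i) (hlam i)).map_iSup _
    _ = ⨆ n, ∏ i, (∫⁻ x, F n i x) ^ lam i :=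
        ENNReal.prod_iSup_of_monotone _ fun i m n hmn =>
          ENNReal.rpow_le_rpow (lintegral_mono (hF_mono i hmn)) (hlam i).le
    _ ≤ ∫⁻ x, h x := iSup_le hF

theorem satisfiesPrekopaLeindler (hlam : ∀ i, 0 ≤ lam i) (hsum : ∑ i, lam i = 1) :
    SatisfiesPrekopaLeindler (volume : Measure ℝ) lam := by
  refine .of_subtype_pos hlam (satisfiesPrekopaLeindler_of_pos (fun i => i.2) ?_)
  rw [← hsum, ← Fintype.sum_subtype_add_sum_subtype (fun i => 0 < lam i) lam,
    Fintype.sum_eq_zero (fun i : {i // ¬0 < lam i} => lam i) fun i =>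
      le_antisymm (not_lt.1 i.2) (hlam i), add_zero]

end Real

theorem SatisfiesPrekopaLeindler.volume_pi {ι : Type*} [Fintype ι] {lam : ι → ℝ}
    (h : SatisfiesPrekopaLeindler (volume : Measure ℝ) lam) :
    ∀ n : ℕ, SatisfiesPrekopaLeindler (volume : Measure (Fin n → ℝ)) lam
  | 0 => by rw [Measure.volume_pi_eq_dirac 0]; exact dirac_zero
  | n + 1 => by
    refine (h.prod (volume_pi h n)).of_measurePreserving
      (Fin.consLinearEquiv ℝ fun _ => ℝ).toLinearMap ?_
    have hcons : ⇑(MeasurableEquiv.piFinSuccAbove (fun _ : Fin (n + 1) => ℝ) 0).symm =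
        Fin.consLinearEquiv ℝ fun _ => ℝ := by
      ext p : 1
      simp only [MeasurableEquiv.piFinSuccAbove_symm_apply, Fin.insertNthEquiv_zero]
      rfl
    exact hcons ▸ (volume_preserving_piFinSuccAbove (fun _ : Fin (n + 1) => ℝ) 0).symm

/-- The Prékopa–Leindler inequality for `k` functions: if `f_1, …, f_k, h` are nonnegative
integrable functions on `ℝ^n`, `λ_i ≥ 0` with `∑ λ_i = 1`, and
`h(∑ λ_i x_i) ≥ ∏ f_i(x_i)^{λ_i}` for all `x_1, …, x_k`, then
`∏ (∫ f_i)^{λ_i} ≤ ∫ h`. -/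
theorem prekopa_leindler_many (n k : ℕ)
    (f : Fin k → EuclideanSpace ℝ (Fin n) → ℝ)
    (h : EuclideanSpace ℝ (Fin n) → ℝ)
    (hf_nonneg : ∀ i x, 0 ≤ f i x)
    (hf_int : ∀ i, Integrable (f i))
    (hh_nonneg : ∀ x, 0 ≤ h x)
    (hh_int : Integrable h)
    (lam : Fin k → ℝ)
    (hlam_nonneg : ∀ i, 0 ≤ lam i)
    (hlam_sum : ∑ i : Fin k, lam i = 1)
    (hcond : ∀ x : Fin k → EuclideanSpace ℝ (Fin n),
      ∏ i : Fin k, (f i (x i)) ^ (lam i) ≤ h (∑ i : Fin k, lam i • x i)) :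
    ∏ i : Fin k, (∫ x : EuclideanSpace ℝ (Fin n), f i x) ^ (lam i)
      ≤ ∫ x : EuclideanSpace ℝ (Fin n), h x := by
  have hPL : SatisfiesPrekopaLeindler (volume : Measure (EuclideanSpace ℝ (Fin n))) lam :=
    ((Real.satisfiesPrekopaLeindler hlam_nonneg hlam_sum).volume_pi n).of_measurePreserving
      (WithLp.linearEquiv 2 ℝ (Fin n → ℝ)).symm.toLinearMap (PiLp.volume_preserving_toLp _)
  exact hPL.prod_integral_rpow_le hlam_nonneg hf_nonneg hf_int hh_nonneg hh_int hcond
end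

section
/- (Monotonicity of the multimarginal Blaschke–Santaló functional) Let k ≥ 2, C > 0, λ_1, …, λ_k ∈ (0,1) with ∑_{i=1}^k λ_i = 1, and let V_1, …, V_k : ℝ^n → ℝ be measurable functions with e^{−V_i} integrable and 0 < ∫ e^{−V_i} dx, satisfying ∑_{i=1}^k λ_i V_i(x_i) ≥ C ∑_{1 ≤ i < j ≤ k} λ_i λ_j ⟨x_i, x_j⟩ for all x_1, …, x_k ∈ ℝ^n. Let U_1, …, U_k : ℝ^n → ℝ be measurable functions with e^{−U_i} integrable, satisfying ∑_{i=1}^k λ_i U_i(x_i) ≥ C ∑_{1 ≤ i < j ≤ k} λ_i λ_j ⟨x_i, x_j⟩ for all x_1, …, x_k ∈ ℝ^n, and suppose there exist a nonnegative function ρ with ρ·dx a probability measure and convex functions Φ_i : ℝ^n → ℝ such that for each i the (almost everywhere defined) gradient map ∇Φ_i pushes ρ·dx forward onto (e^{−V_i}/∫ e^{−V_i} dx)·dx, and for ρ·dx-almost every y, ∑_{i=1}^k λ_i U_i(∇Φ_i(y)) = C ∑_{1 ≤ i < j ≤ k} λ_i λ_j ⟨∇Φ_i(y), ∇Φ_j(y)⟩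 (this holds when ρ·dx is the Wasserstein barycenter of the measures (e^{−V_i}/∫ e^{−V_i} dx)·dx with weights λ_i, ∇Φ_i are the optimal transport maps, and (λ_i U_i) solves the dual multimarginal Kantorovich problem with cost C ∑_{i<j} λ_i λ_j ⟨x_i, x_j⟩). Then ∏_{i=1}^k (∫ e^{−V_i} dx_i)^{λ_i} ≤ ∏_{i=1}^k (∫ e^{−U_i} dx_i)^{λ_i}. -/
/-! For `ρ·dx`-almost every `y`, with `xᵢ = ∇Φᵢ(y)`, the dual identity for `U` and the
constraint on `V` give `∑ λᵢ Uᵢ(xᵢ) ≤ ∑ λᵢ Vᵢ(xᵢ)`, i.e. `1 ≤ ∏ exp(Vᵢ(xᵢ) - Uᵢ(xᵢ))^{λᵢ}`.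
Integrating against the probability measure `ρ·dx` and applying Hölder's inequality with
exponents `1/λᵢ` gives `1 ≤ ∏ (∫ exp(Vᵢ ∘ ∇Φᵢ - Uᵢ ∘ ∇Φᵢ) ρ)^{λᵢ}`, and because `∇Φᵢ` pushes
`ρ·dx` onto `e^{-Vᵢ} / ∫ e^{-Vᵢ}`, the `i`-th integral is `∫ e^{-Uᵢ} / ∫ e^{-Vᵢ}`. -/

open MeasureTheory Real

/-- The weighted sum `∑_{1 ≤ i < j ≤ k} λ_i λ_j ⟨x_i, x_j⟩`. -/
noncomputable def wPairSum {n k : ℕ} (lam : Fin k → ℝ)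
    (x : Fin k → EuclideanSpace ℝ (Fin n)) : ℝ :=
  ∑ i : Fin k, ∑ j : Fin k,
    if i < j then lam i * lam j * (inner ℝ (x i) (x j) : ℝ) else 0

@[fun_prop]
lemma measurable_gradient {E : Type*} [NormedAddCommGroup E] [InnerProductSpace ℝ E]
    [CompleteSpace E] [MeasurableSpace E] [BorelSpace E] (f : E → ℝ) :
    Measurable (gradient f) :=
  (InnerProductSpace.toDual ℝ E).symm.continuous.measurable.comp (measurable_fderiv ℝ f)

section WeightedProducts

variable {ι : Type*} (s : Finset ι) {w : ι → ℝ}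

lemma ENNReal.prod_ofReal_rpow {c : ι → ℝ} (hc : ∀ i ∈ s, 0 ≤ c i) (hw : ∀ i ∈ s, 0 ≤ w i) :
    ∏ i ∈ s, ENNReal.ofReal (c i) ^ w i = ENNReal.ofReal (∏ i ∈ s, c i ^ w i) := by
  rw [ENNReal.ofReal_prod_of_nonneg fun i hi => rpow_nonneg (hc i hi) _]
  exact Finset.prod_congr rfl fun i hi => ENNReal.ofReal_rpow_of_nonneg (hc i hi) (hw i hi)

lemma Real.prod_exp_rpow (a : ι → ℝ) : ∏ i ∈ s, exp (a i) ^ w i = exp (∑ i ∈ s, w i * a i) := by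
  rw [Real.exp_sum]
  exact Finset.prod_congr rfl fun i _ => by rw [← Real.exp_mul, mul_comm]

lemma prod_rpow_le_prod_rpow_of_one_le_prod_div_rpow {a b : ι → ℝ}
    (ha : ∀ i ∈ s, 0 ≤ a i) (hb : ∀ i ∈ s, 0 < b i) (h : 1 ≤ ∏ i ∈ s, (a i / b i) ^ w i) :
    ∏ i ∈ s, b i ^ w i ≤ ∏ i ∈ s, a i ^ w i := by
  rwa [Finset.prod_congr rfl fun i hi => div_rpow (ha i hi) (hb i hi).le (w i),
    Finset.prod_div_distrib, one_le_div (Finset.prod_pos fun i hi => rpow_pos_of_pos (hb i hi) _)]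
    at h

lemma one_le_prod_lintegral_rpow_of_ae_one_le {α : Type*} [MeasurableSpace α] {μ : Measure α}
    [IsProbabilityMeasure μ] {f : ι → α → ENNReal} (hf : ∀ i ∈ s, AEMeasurable (f i) μ)
    (hw : ∑ i ∈ s, w i = 1) (hw0 : ∀ i ∈ s, 0 ≤ w i)
    (h : ∀ᵐ a ∂μ, 1 ≤ ∏ i ∈ s, f i a ^ w i) :
    1 ≤ ∏ i ∈ s, (∫⁻ a, f i a ∂μ) ^ w i :=
  calc 1 = ∫⁻ _, 1 ∂μ := by simp
    _ ≤ ∫⁻ a, ∏ i ∈ s, f i a ^ w i ∂μ := lintegral_mono_ae h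
    _ ≤ ∏ i ∈ s, (∫⁻ a, f i a ∂μ) ^ w i := ENNReal.lintegral_prod_norm_pow_le s hf hw hw0

end WeightedProducts

lemma lintegral_ofReal_exp_sub_comp_of_map_eq {α β : Type*} [MeasurableSpace α]
    [MeasurableSpace β] {μ : Measure α} {ν : Measure β} {T : α → β} (hT : Measurable T)
    {V U : β → ℝ} (hV : Measurable V) (hU : Measurable U)
    (hU_int : Integrable (fun x => exp (-U x)) ν) {Z : ℝ} (hZ : 0 < Z)
    (hpush : μ.map T = ν.withDensity fun x => ENNReal.ofReal (exp (-V x) / Z)) :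
    ∫⁻ y, ENNReal.ofReal (exp (V (T y) - U (T y))) ∂μ
      = ENNReal.ofReal ((∫ x, exp (-U x) ∂ν) / Z) := by
  have hdensity_mul : ∀ x, ENNReal.ofReal (exp (-V x) / Z) * ENNReal.ofReal (exp (V x - U x))
      = ENNReal.ofReal (exp (-U x) / Z) := fun x => by
    rw [← ENNReal.ofReal_mul (by positivity), div_mul_eq_mul_div, ← exp_add]
    ring_nf
  rw [← lintegral_map (f := fun x => ENNReal.ofReal (exp (V x - U x))) (by fun_prop) hT, hpush,
    lintegral_withDensity_eq_lintegral_mul _ (by fun_prop) (by fun_prop)]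
  simp only [Pi.mul_apply, hdensity_mul]
  rw [← integral_div, ofReal_integral_eq_lintegral_ofReal (hU_int.div_const Z)
    (Filter.Eventually.of_forall fun x => by positivity)]

theorem BS_monotone_multimarginal_general (n k : ℕ) (C : ℝ)
    (lam : Fin k → ℝ)
    (hlam : ∀ i, lam i ∈ Set.Ioo (0 : ℝ) 1)
    (hlam_sum : ∑ i : Fin k, lam i = 1)
    (V U : Fin k → EuclideanSpace ℝ (Fin n) → ℝ)
    (hV_meas : ∀ i, Measurable (V i))
    (hV_pos : ∀ i, 0 < ∫ x : EuclideanSpace ℝ (Fin n), Real.exp (-(V i x)))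
    (hV_cond : ∀ x : Fin k → EuclideanSpace ℝ (Fin n),
      C * wPairSum lam x ≤ ∑ i : Fin k, lam i * V i (x i))
    (hU_meas : ∀ i, Measurable (U i))
    (hU_int : ∀ i, Integrable (fun x : EuclideanSpace ℝ (Fin n) => Real.exp (-(U i x))))
    (ρ : EuclideanSpace ℝ (Fin n) → ℝ)
    (hρ_prob : IsProbabilityMeasure
      (volume.withDensity fun x : EuclideanSpace ℝ (Fin n) => ENNReal.ofReal (ρ x)))
    (Φ : Fin k → EuclideanSpace ℝ (Fin n) → ℝ)
    (hΦ_push : ∀ i,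
      Measure.map (fun x => gradient (Φ i) x)
          (volume.withDensity fun x : EuclideanSpace ℝ (Fin n) => ENNReal.ofReal (ρ x))
        = volume.withDensity fun x : EuclideanSpace ℝ (Fin n) =>
            ENNReal.ofReal (Real.exp (-(V i x)) /
              ∫ z : EuclideanSpace ℝ (Fin n), Real.exp (-(V i z))))
    (hU_dual : ∀ᵐ y ∂(volume.withDensity fun x : EuclideanSpace ℝ (Fin n) =>
        ENNReal.ofReal (ρ x)),
      ∑ i : Fin k, lam i * U i (gradient (Φ i) y)
        = C * wPairSum lam (fun i => gradient (Φ i) y)) :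
    ∏ i : Fin k, (∫ x : EuclideanSpace ℝ (Fin n), Real.exp (-(V i x))) ^ (lam i)
      ≤ ∏ i : Fin k, (∫ x : EuclideanSpace ℝ (Fin n), Real.exp (-(U i x))) ^ (lam i) := by
  set μ := volume.withDensity fun x : EuclideanSpace ℝ (Fin n) => ENNReal.ofReal (ρ x)
  have hlam0 : ∀ i ∈ Finset.univ, 0 ≤ lam i := fun i _ => (hlam i).1.le
  have hJ0 : ∀ i ∈ Finset.univ, 0 ≤ ∫ x, exp (-(U i x)) :=
    fun i _ => integral_nonneg fun x => (exp_pos _).le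
  have h_ae : ∀ᵐ y ∂μ, 1 ≤ ∏ i, ENNReal.ofReal
      (exp (V i (gradient (Φ i) y) - U i (gradient (Φ i) y))) ^ lam i := by
    filter_upwards [hU_dual] with y hy
    have hUV := hy ▸ hV_cond fun i => gradient (Φ i) y
    rw [ENNReal.prod_ofReal_rpow _ (fun i _ => (exp_pos _).le) hlam0, Real.prod_exp_rpow,
      ENNReal.one_le_ofReal, one_le_exp_iff]
    simp only [mul_sub, Finset.sum_sub_distrib]
    linarith
  have h_holder := one_le_prod_lintegral_rpow_of_ae_one_le Finset.univ
    (fun i _ => (by fun_prop : Measurable _).aemeasurable) hlam_sum hlam0 h_ae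
  simp only [lintegral_ofReal_exp_sub_comp_of_map_eq (measurable_gradient _) (hV_meas _)
    (hU_meas _) (hU_int _) (hV_pos _) (hΦ_push _)] at h_holder
  rw [ENNReal.prod_ofReal_rpow _ (fun i hi => div_nonneg (hJ0 i hi) (hV_pos i).le) hlam0,
    ENNReal.one_le_ofReal] at h_holder
  exact prod_rpow_le_prod_rpow_of_one_le_prod_div_rpow _ hJ0 (fun i _ => hV_pos i) h_holder

/-- Monotonicity of the multimarginal Blaschke–Santaló functional: with `(λ_i U_i)` a
solution of the dual multimarginal Kantorovich problem for the marginals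
`(e^{-V_i}/∫e^{-V_i})·dx` and cost `C ∑_{i<j} λ_i λ_j ⟨x_i, x_j⟩` (expressed via a barycenter
measure `ρ·dx` and transport potentials `Φ_i`), one has
`∏ (∫ e^{-V_i})^{λ_i} ≤ ∏ (∫ e^{-U_i})^{λ_i}`. -/
theorem BS_monotone_multimarginal (n k : ℕ) (hk : 2 ≤ k) (C : ℝ) (hC : 0 < C)
    (lam : Fin k → ℝ)
    (hlam : ∀ i, lam i ∈ Set.Ioo (0 : ℝ) 1)
    (hlam_sum : ∑ i : Fin k, lam i = 1)
    (V U : Fin k → EuclideanSpace ℝ (Fin n) → ℝ)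
    (hV_meas : ∀ i, Measurable (V i))
    (hV_int : ∀ i, Integrable (fun x : EuclideanSpace ℝ (Fin n) => Real.exp (-(V i x))))
    (hV_pos : ∀ i, 0 < ∫ x : EuclideanSpace ℝ (Fin n), Real.exp (-(V i x)))
    (hV_cond : ∀ x : Fin k → EuclideanSpace ℝ (Fin n),
      C * wPairSum lam x ≤ ∑ i : Fin k, lam i * V i (x i))
    (hU_meas : ∀ i, Measurable (U i))
    (hU_int : ∀ i, Integrable (fun x : EuclideanSpace ℝ (Fin n) => Real.exp (-(U i x))))
    (hU_cond : ∀ x : Fin k → EuclideanSpace ℝ (Fin n),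
      C * wPairSum lam x ≤ ∑ i : Fin k, lam i * U i (x i))
    (ρ : EuclideanSpace ℝ (Fin n) → ℝ)
    (hρ_nonneg : ∀ x, 0 ≤ ρ x)
    (hρ_prob : IsProbabilityMeasure
      (volume.withDensity fun x : EuclideanSpace ℝ (Fin n) => ENNReal.ofReal (ρ x)))
    (Φ : Fin k → EuclideanSpace ℝ (Fin n) → ℝ)
    (hΦ_conv : ∀ i, ConvexOn ℝ Set.univ (Φ i))
    (hΦ_push : ∀ i,
      Measure.map (fun x => gradient (Φ i) x)
          (volume.withDensity fun x : EuclideanSpace ℝ (Fin n) => ENNReal.ofReal (ρ x))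
        = volume.withDensity fun x : EuclideanSpace ℝ (Fin n) =>
            ENNReal.ofReal (Real.exp (-(V i x)) /
              ∫ z : EuclideanSpace ℝ (Fin n), Real.exp (-(V i z))))
    (hU_dual : ∀ᵐ y ∂(volume.withDensity fun x : EuclideanSpace ℝ (Fin n) =>
        ENNReal.ofReal (ρ x)),
      ∑ i : Fin k, lam i * U i (gradient (Φ i) y)
        = C * wPairSum lam (fun i => gradient (Φ i) y)) :
    ∏ i : Fin k, (∫ x : EuclideanSpace ℝ (Fin n), Real.exp (-(V i x))) ^ (lam i)
      ≤ ∏ i : Fin k, (∫ x : EuclideanSpace ℝ (Fin n), Real.exp (-(U i x))) ^ (lam i) :=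
  BS_monotone_multimarginal_general n k C lam hlam hlam_sum V U hV_meas hV_pos hV_cond hU_meas
    hU_int ρ hρ_prob Φ hΦ_push hU_dual
end
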